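/- arXiv:2603.08389 — 2 statements merged into one kernel-verified Lean document; each statement's English description precedes it below -/
import Mathlib

section
/- Let N ≥ 1 be a natural number, and let α > 0, I₀ ≥ 0, c > 0, σ² > 0 be real numbers. Define f : [0, N−1] → ℝ by f(ℓ) = (N − ℓ) / (c·(I₀ − αℓ)² + σ²). If the stationary point ℓ* = N − √((N − I₀/α)² + σ²/(α²c)) lies in [0, N−1], then f attains its maximum on [0, N−1] at ℓ = ℓ*. -/
/-!
With `x = N - ℓ` and `b = αN - I₀`, the function is `x / q x` for the quadratic
`q x = c (αx - b)² + σ²`. If `S ≥ 0` satisfies `α² c S² = c b² + σ²` (so `S = N - ℓ*`), then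
`S · q x - x · q S = α² c S (x - S)² ≥ 0`, which is `f ℓ ≤ f ℓ*` after clearing denominators.
-/

theorem div_sq_add_le_of_sq_eq {c α b s S : ℝ} (hc : 0 ≤ c) (hs : 0 < s) (hS : 0 ≤ S)
    (hSq : α ^ 2 * c * S ^ 2 = c * b ^ 2 + s) (x : ℝ) :
    x / (c * (α * x - b) ^ 2 + s) ≤ S / (c * (α * S - b) ^ 2 + s) := by
  rw [div_le_div_iff₀ (by positivity) (by positivity)]
  have hgap : S * (c * (α * x - b) ^ 2 + s) - x * (c * (α * S - b) ^ 2 + s)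
      = α ^ 2 * c * S * (x - S) ^ 2 := by
    linear_combination (x - S) * hSq
  linarith [hgap, show 0 ≤ α ^ 2 * c * S * (x - S) ^ 2 by positivity]

theorem stmt_3_general (N : ℕ) (α I₀ c sigma2 : ℝ)
    (hα : 0 < α) (hc : 0 < c) (hs : 0 < sigma2)
    (f : ℝ → ℝ)
    (hf : ∀ ℓ, f ℓ = ((N : ℝ) - ℓ) / (c * (I₀ - α * ℓ) ^ 2 + sigma2))
    (ℓstar : ℝ)
    (hℓstar : ℓstar = (N : ℝ) - Real.sqrt (((N : ℝ) - I₀ / α) ^ 2 + sigma2 / (α ^ 2 * c))) :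
    ∀ ℓ ∈ Set.Icc (0 : ℝ) ((N : ℝ) - 1), f ℓ ≤ f ℓstar := by
  intro ℓ _
  set S := Real.sqrt (((N : ℝ) - I₀ / α) ^ 2 + sigma2 / (α ^ 2 * c))
  have hSq : α ^ 2 * c * S ^ 2 = c * (α * N - I₀) ^ 2 + sigma2 := by
    rw [Real.sq_sqrt (by positivity)]
    field_simp
  have key := div_sq_add_le_of_sq_eq hc.le hs (Real.sqrt_nonneg _) hSq (N - ℓ)
  rw [hf, hf, hℓstar]
  convert key using 3 <;> ring

/-- The array gain vs. residual interference function `f(ℓ) = (N−ℓ)/(c(I₀−αℓ)²+σ²)`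
attains its maximum on `[0, N−1]` at the stationary point `ℓ*`. -/
theorem stmt_3 (N : ℕ) (hN : 1 ≤ N) (α I₀ c sigma2 : ℝ)
    (hα : 0 < α) (hI₀ : 0 ≤ I₀) (hc : 0 < c) (hs : 0 < sigma2)
    (f : ℝ → ℝ)
    (hf : ∀ ℓ, f ℓ = ((N : ℝ) - ℓ) / (c * (I₀ - α * ℓ) ^ 2 + sigma2))
    (ℓstar : ℝ)
    (hℓstar : ℓstar = (N : ℝ) - Real.sqrt (((N : ℝ) - I₀ / α) ^ 2 + sigma2 / (α ^ 2 * c)))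
    (hmem : ℓstar ∈ Set.Icc (0 : ℝ) ((N : ℝ) - 1)) :
    ∀ ℓ ∈ Set.Icc (0 : ℝ) ((N : ℝ) - 1), f ℓ ≤ f ℓstar :=
  stmt_3_general N α I₀ c sigma2 hα hc hs f hf ℓstar hℓstar
end

section
/- Let a, b: ℝ → ℝ with a(ℓ) = N − ℓ and b(ℓ) = c(I₀ − αℓ)² + σ², with N, c, α, σ² > 0 and I₀/α ≤ N. Then the function f(ℓ) = a(ℓ)/b(ℓ) is unimodal on (−∞, N]: it is nondecreasing on (−∞, ℓ*] and nonincreasing on [ℓ*, N], where ℓ* = N − √((N − I₀/α)² + σ²/(α²c)). -/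
/-!
With `d = N - I₀/α` one has `c(I₀ - αℓ)² = α²c(N - ℓ - d)²`, and the numerator of `f'` collapses
to `α²c((N - ℓ)² - d²) - σ² = α²c((N - ℓ)² - r²)`, where `r² = d² + σ²/(α²c)` and `ℓ* = N - r`.
So `f'` has the sign of `(N - ℓ)² - r²`: nonnegative for `ℓ ≤ ℓ*`, nonpositive on `[ℓ*, N]`.
-/

open Set

theorem monotoneOn_Iic_antitoneOn_Icc_of_hasDerivAt {f k : ℝ → ℝ} {N r : ℝ} (hr : 0 ≤ r)
    (hf : ∀ x, HasDerivAt f (k x * ((N - x) ^ 2 - r ^ 2)) x) (hk : ∀ x, 0 ≤ k x) :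
    MonotoneOn f (Iic (N - r)) ∧ AntitoneOn f (Icc (N - r) N) := by
  have hcont : Continuous f := continuous_iff_continuousAt.2 fun x => (hf x).continuousAt
  constructor
  · refine monotoneOn_of_hasDerivWithinAt_nonneg (convex_Iic _) hcont.continuousOn
      (fun x _ => (hf x).hasDerivWithinAt) fun x hx => ?_
    rw [interior_Iic] at hx
    have hrx : r ≤ N - x := by linarith [mem_Iio.1 hx]
    exact mul_nonneg (hk x) (sub_nonneg.2 (pow_le_pow_left₀ hr hrx 2))
  · refine antitoneOn_of_hasDerivWithinAt_nonpos (convex_Icc _ _) hcont.continuousOn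
      (fun x _ => (hf x).hasDerivWithinAt) fun x hx => ?_
    rw [interior_Icc] at hx
    have hxr : N - x ≤ r := by linarith [hx.1]
    have hx0 : 0 ≤ N - x := by linarith [hx.2]
    exact mul_nonpos_of_nonneg_of_nonpos (hk x) (sub_nonpos.2 (pow_le_pow_left₀ hx0 hxr 2))

theorem hasDerivAt_sub_div_sq_add {N c α σ I₀ : ℝ} (hc : c ≠ 0) (hα : α ≠ 0) {ℓ : ℝ}
    (hb : c * (I₀ - α * ℓ) ^ 2 + σ ≠ 0) :
    HasDerivAt (fun ℓ => (N - ℓ) / (c * (I₀ - α * ℓ) ^ 2 + σ))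
      (α ^ 2 * c / (c * (I₀ - α * ℓ) ^ 2 + σ) ^ 2 *
        ((N - ℓ) ^ 2 - ((N - I₀ / α) ^ 2 + σ / (α ^ 2 * c)))) ℓ := by
  have hnum : HasDerivAt (fun x : ℝ => N - x) (-1) ℓ := by
    simpa using (hasDerivAt_id ℓ).const_sub N
  have hlin : HasDerivAt (fun x : ℝ => I₀ - α * x) (-α) ℓ := by
    simpa using ((hasDerivAt_id ℓ).const_mul α).const_sub I₀
  have hden := ((hlin.fun_pow 2).const_mul c).add_const σ
  refine (hnum.fun_div hden hb).congr_deriv ?_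
  field_simp
  ring

theorem stmt_19_general (N c α sigma2 I₀ : ℝ)
    (hc : 0 < c) (hα : 0 < α) (hs : 0 < sigma2)
    (f : ℝ → ℝ)
    (hf : ∀ ℓ, f ℓ = (N - ℓ) / (c * (I₀ - α * ℓ) ^ 2 + sigma2))
    (ℓstar : ℝ)
    (hℓ : ℓstar = N - Real.sqrt ((N - I₀ / α) ^ 2 + sigma2 / (α ^ 2 * c))) :
    MonotoneOn f (Set.Iic ℓstar) ∧ AntitoneOn f (Set.Icc ℓstar N) := by
  obtain rfl : f = fun ℓ => (N - ℓ) / (c * (I₀ - α * ℓ) ^ 2 + sigma2) := funext hf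
  subst hℓ
  have hr2 : Real.sqrt ((N - I₀ / α) ^ 2 + sigma2 / (α ^ 2 * c)) ^ 2
      = (N - I₀ / α) ^ 2 + sigma2 / (α ^ 2 * c) := Real.sq_sqrt (by positivity)
  refine monotoneOn_Iic_antitoneOn_Icc_of_hasDerivAt (Real.sqrt_nonneg _)
    (k := fun ℓ => α ^ 2 * c / (c * (I₀ - α * ℓ) ^ 2 + sigma2) ^ 2) (fun ℓ => ?_)
    (fun ℓ => by positivity)
  rw [hr2]
  exact hasDerivAt_sub_div_sq_add hc.ne' hα.ne' (by positivity)

/-- Unimodality of `f(ℓ) = (N−ℓ)/(c(I₀−αℓ)²+σ²)` on `(−∞, N]`: nondecreasing up to the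
stationary point `ℓ*` and nonincreasing from `ℓ*` to `N`. -/
theorem stmt_19 (N c α sigma2 I₀ : ℝ)
    (hN : 0 < N) (hc : 0 < c) (hα : 0 < α) (hs : 0 < sigma2) (hI : I₀ / α ≤ N)
    (f : ℝ → ℝ)
    (hf : ∀ ℓ, f ℓ = (N - ℓ) / (c * (I₀ - α * ℓ) ^ 2 + sigma2))
    (ℓstar : ℝ)
    (hℓ : ℓstar = N - Real.sqrt ((N - I₀ / α) ^ 2 + sigma2 / (α ^ 2 * c))) :
    MonotoneOn f (Set.Iic ℓstar) ∧ AntitoneOn f (Set.Icc ℓstar N) :=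
  stmt_19_general N c α sigma2 I₀ hc hα hs f hf ℓstar hℓ
end
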